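/- For every integer n ≥ 1, B_{2n}/(2n) = ((2n)!/(6^{n}·2^{2n})) · ∑_{l=1}^{n} (−1)^{l+1} · P(n+1−l, n). -/

import Mathlib

/-- Riordan's coefficients `a(n,l)`: `a(0,0) = 1`, `a(n,0) = 0` for `n ≥ 1`, and for `l ≥ 1`,
`a(n,l) = ∑_{i=l−1}^{n−1} a(i,l−1) · C(2n+l−1, 2n−2i)`. -/
def a : ℕ → ℕ → ℚ
  | 0, 0 => 1
  | _ + 1, 0 => 0
  | n, l + 1 => ∑ i ∈ Finset.Ico l n, a i l * (Nat.choose (2 * n + l) (2 * n - 2 * i) : ℚ)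

/-- The P-polynomial values `P(j,n) := 6^n · a(n, n+1−j) / ((2n)! · (n+1−j) · C(3n+1−j, 2n))`
(for `1 ≤ j ≤ n`). -/
def P (j n : ℕ) : ℚ :=
  6 ^ n * a n (n + 1 - j) /
    ((Nat.factorial (2 * n) : ℚ) * ((n + 1 - j : ℕ) : ℚ) *
      (Nat.choose (3 * n + 1 - j) (2 * n) : ℚ))

/-!
Let `sinhc = sinh x / x` and `u = sinhc - 1`. Riordan's recursion for `a` is the coefficient form
of `((x u)^(l+1))' = (l+1) (x u)^l (cosh x - 1)`, which gives `[x^(2n)] u^l = l! a(n,l) / (2n+l)!`.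
Expanding `log sinhc = log (1 + u)` therefore gives `∑_l (-1)^(l+1) P(n+1-l,n) = 6^n [x^(2n)] log sinhc`.
On the other hand `x (log sinhc)' = x coth x - 1 = ∑_{n ≥ 1} 2^(2n) B_(2n) x^(2n) / (2n)!`, since
`B(2x) (e^(2x) - 1) = 2x`; comparing the coefficients of `x^(2n)` gives the theorem.
-/

open PowerSeries Finset Nat

lemma a_succ (n l : ℕ) :
    a n (l + 1) = ∑ i ∈ Ico l n, a i l * ((2 * n + l).choose (2 * n - 2 * i) : ℚ) := by
  cases n <;> rfl

lemma a_eq_zero {n l : ℕ} (h : n < l) : a n l = 0 := by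
  obtain ⟨l, rfl⟩ : ∃ k, l = k + 1 := ⟨l - 1, by omega⟩
  rw [a_succ, Ico_eq_empty (by omega), sum_empty]

lemma a_succ_eq_sum_range (n l : ℕ) :
    a n (l + 1) = ∑ i ∈ range n, a i l * ((2 * n + l).choose (2 * n - 2 * i) : ℚ) := by
  rw [a_succ, range_eq_Ico]
  refine sum_subset (Ico_subset_Ico_left l.zero_le) fun i hi hil => ?_
  rw [a_eq_zero (by grind), zero_mul]

lemma cast_choose_two_mul_sub {n l i : ℕ} (hi : i ≤ n) :
    ((2 * n + l).choose (2 * n - 2 * i) : ℚ) = (2 * n + l)! / ((2 * (n - i))! * (2 * i + l)!) := by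
  rw [Nat.cast_choose ℚ (by omega), show 2 * n + l - (2 * n - 2 * i) = 2 * i + l by omega,
    show 2 * (n - i) = 2 * n - 2 * i by omega]

lemma P_eq {l n : ℕ} (hl : l ∈ Icc 1 n) :
    P (n + 1 - l) n = 6 ^ n * (l ! * a n l / (2 * n + l)!) / l := by
  rw [mem_Icc] at hl
  rw [P, show n + 1 - (n + 1 - l) = l by omega, show 3 * n + 1 - (n + 1 - l) = 2 * n + l by omega,
    Nat.cast_choose ℚ (by omega), show 2 * n + l - 2 * n = l by omega]
  field_simp

namespace PowerSeries

section Even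

/- `rescale (-1) f = f` says that `f` is an even power series. -/
variable {R : Type*} [CommRing R] [IsAddTorsionFree R]

theorem coeff_eq_zero_of_rescale_neg_one_eq {f : R⟦X⟧} (hf : rescale (-1) f = f) {m : ℕ}
    (hm : Odd m) : coeff m f = 0 := by
  have := congrArg (coeff m) hf
  rwa [coeff_rescale, hm.neg_one_pow, neg_one_mul, neg_eq_self] at this

theorem coeff_two_mul_mul_of_rescale_neg_one_eq {f : R⟦X⟧} (hf : rescale (-1) f = f)
    (g : R⟦X⟧) (n : ℕ) :
    coeff (2 * n) (f * g) = ∑ p ∈ antidiagonal n, coeff (2 * p.1) f * coeff (2 * p.2) g := by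
  rw [coeff_mul, ← sum_image (s := antidiagonal n) (g := fun p => (2 * p.1, 2 * p.2))
    (f := fun p => coeff p.1 f * coeff p.2 g) (fun p _ q _ h => by grind)]
  refine (sum_subset (fun p hp => ?_) fun p hp hpn => ?_).symm
  · obtain ⟨q, hq, rfl⟩ := mem_image.mp hp
    rw [HasAntidiagonal.mem_antidiagonal] at hq ⊢
    omega
  · rw [HasAntidiagonal.mem_antidiagonal] at hp
    have hodd : Odd p.1 := by
      by_contra he
      obtain ⟨k, hk⟩ := Nat.not_odd_iff_even.mp he
      refine hpn (mem_image.mpr ⟨(k, n - k), ?_, ?_⟩)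
      · rw [HasAntidiagonal.mem_antidiagonal]
        omega
      · ext <;> dsimp only <;> omega
    rw [coeff_eq_zero_of_rescale_neg_one_eq hf hodd, zero_mul]

end Even

section Log

variable {A : Type*} [CommRing A] [Algebra ℚ A]

theorem derivative_log_mul_one_add_X : d⁄dX A (log A) * (1 + X) = 1 := by
  ext n
  rw [deriv_log, mul_add, mul_one, map_add]
  rcases n with _ | n
  · simp
  · rw [coeff_succ_mul_X, coeff_mk, coeff_mk, coeff_one, if_neg n.succ_ne_zero, pow_succ,
      mul_neg_one, map_neg, neg_add_cancel]

theorem mul_derivative_logOf {f : A⟦X⟧} (hf : constantCoeff f = 1) :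
    f * d⁄dX A (logOf f) = d⁄dX A f := by
  have hsub : HasSubst (f - 1) := HasSubst.of_constantCoeff_zero' (by simp [hf])
  have hinv : (d⁄dX A (log A)).subst (f - 1) * f = 1 := by
    have := congrArg (substAlgHom hsub) (derivative_log_mul_one_add_X (A := A))
    rwa [map_mul, map_add, map_one, coe_substAlgHom, subst_X hsub, add_sub_cancel] at this
  rw [logOf_eq, derivative_subst hsub, map_sub, derivative_one, sub_zero, ← mul_assoc,
    mul_comm f, hinv, one_mul]

theorem coeff_logOf {f : A⟦X⟧} (hf : constantCoeff f = 1) {m N : ℕ}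
    (hN : ∀ l, N < l → coeff m ((f - 1) ^ l) = 0) :
    coeff m (logOf f) =
      ∑ l ∈ Icc 1 N, algebraMap ℚ A ((-1) ^ (l + 1) / l) * coeff m ((f - 1) ^ l) := by
  have hsub : HasSubst (f - 1) := HasSubst.of_constantCoeff_zero' (by simp [hf])
  rw [logOf_eq, coeff_subst' hsub, finsum_eq_sum_of_support_subset _ (s := Icc 1 N)]
  · refine sum_congr rfl fun l hl => ?_
    rw [coeff_log, if_neg (by grind), Algebra.smul_def, Algebra.algebraMap_self_apply]
  · intro l hl
    rw [Function.mem_support] at hl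
    rw [coe_Icc, Set.mem_Icc]
    by_contra h
    refine hl ?_
    rcases Nat.eq_zero_or_pos l with rfl | hl0
    · rw [coeff_log, if_pos rfl, zero_smul]
    · rw [hN l (by omega), smul_zero]

end Log

noncomputable def sinhc : ℚ⟦X⟧ := mk fun m => if Even m then ((m + 1)! : ℚ)⁻¹ else 0

noncomputable def cosh : ℚ⟦X⟧ := mk fun m => if Even m then (m ! : ℚ)⁻¹ else 0

lemma constantCoeff_sinhc : constantCoeff sinhc = 1 := by
  simp [← coeff_zero_eq_constantCoeff_apply, sinhc]

lemma rescale_neg_one_sinhc : rescale (-1) sinhc = sinhc := by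
  ext m
  rcases m.even_or_odd with hm | hm <;>
    simp [coeff_rescale, sinhc, hm, hm.neg_one_pow, Nat.not_even_iff_odd.mpr]

lemma coeff_X_mul_sinhc (m : ℕ) : coeff m (X * sinhc) = if Odd m then (m ! : ℚ)⁻¹ else 0 := by
  rcases m with _ | m
  · simp
  · simp [coeff_succ_X_mul, sinhc, Nat.odd_add_one]

lemma exp_eq_cosh_add_X_mul_sinhc : exp ℚ = cosh + X * sinhc := by
  ext m
  rcases m.even_or_odd with hm | hm <;>
    simp [coeff_X_mul_sinhc, cosh, hm, Nat.not_odd_iff_even.mpr, Nat.not_even_iff_odd.mpr]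

lemma rescale_neg_one_exp_eq_cosh_sub_X_mul_sinhc : rescale (-1) (exp ℚ) = cosh - X * sinhc := by
  ext m
  rcases m.even_or_odd with hm | hm <;>
    simp [coeff_rescale, coeff_X_mul_sinhc, cosh, hm, hm.neg_one_pow, Nat.not_odd_iff_even.mpr,
      Nat.not_even_iff_odd.mpr]

lemma derivative_X_mul_sinhc : d⁄dX ℚ (X * sinhc) = cosh := by
  ext m
  rw [coeff_derivative, coeff_X_mul_sinhc, cosh, coeff_mk]
  rcases m.even_or_odd with hm | hm
  · rw [if_pos (Even.add_one hm), if_pos hm, Nat.factorial_succ]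
    push_cast
    field_simp
  · simp [Nat.odd_add_one, hm, Nat.not_even_iff_odd.mpr]

lemma derivative_X_mul_sinhc_sub_one : d⁄dX ℚ (X * (sinhc - 1)) = cosh - 1 := by
  rw [mul_sub, mul_one, map_sub, derivative_X_mul_sinhc, derivative_X]

lemma coeff_two_mul_cosh_sub_one (j : ℕ) :
    coeff (2 * j) (cosh - 1) = if j = 0 then 0 else ((2 * j)! : ℚ)⁻¹ := by
  rcases j with _ | j <;> simp [cosh, coeff_one]

/- `B(2x) (e^(2x) - 1) = 2x`, multiplied by `e^(-x)`. -/
lemma rescale_two_bernoulliPowerSeries_mul_sinhc :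
    rescale 2 (bernoulliPowerSeries ℚ) * sinhc = cosh - X * sinhc := by
  have hB := congrArg (rescale (2 : ℚ)) (bernoulliPowerSeries_mul_exp_sub_one ℚ)
  have hE := exp_mul_exp_eq_exp_add (A := ℚ) 1 1
  have hEF := exp_mul_exp_eq_exp_add (A := ℚ) 1 (-1)
  rw [rescale_one] at hE hEF
  norm_num at hE hEF
  rw [map_mul, map_sub, map_one, rescale_X, ← hE, exp_eq_cosh_add_X_mul_sinhc, map_ofNat C 2] at hB
  rw [rescale_neg_one_exp_eq_cosh_sub_X_mul_sinhc, exp_eq_cosh_add_X_mul_sinhc] at hEF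
  have h2 : (2 : ℚ⟦X⟧) ≠ 0 := by
    rw [← map_ofNat C 2]
    exact (map_ne_zero_iff _ C_injective).mpr two_ne_zero
  apply mul_left_cancel₀ (mul_ne_zero h2 X_ne_zero)
  linear_combination (cosh - X * sinhc) * hB -
    rescale 2 (bernoulliPowerSeries ℚ) * (cosh + X * sinhc) * hEF

lemma X_mul_derivative_logOf_sinhc :
    X * d⁄dX ℚ (logOf sinhc) = rescale 2 (bernoulliPowerSeries ℚ) - 1 + X := by
  have hlog := mul_derivative_logOf constantCoeff_sinhc
  have hsinh : sinhc + X * d⁄dX ℚ sinhc = cosh := by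
    simpa [Derivation.leibniz, add_comm] using derivative_X_mul_sinhc
  have hsinhc : sinhc ≠ 0 := fun h => by simpa [h] using constantCoeff_sinhc
  apply mul_left_cancel₀ hsinhc
  linear_combination X * hlog + hsinh - rescale_two_bernoulliPowerSeries_mul_sinhc

theorem coeff_two_mul_sinhc_sub_one_pow (l n : ℕ) :
    coeff (2 * n) ((sinhc - 1) ^ l) = l ! * a n l / (2 * n + l)! := by
  induction l generalizing n with
  | zero => rcases n with _ | n <;> simp [a, coeff_one]
  | succ l ih =>
    set u := sinhc - 1
    have heven : rescale (-1) (u ^ l) = u ^ l := by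
      simp only [u, map_pow, map_sub, map_one, rescale_neg_one_sinhc]
    -- the coefficient of `X^(2n+l)` in `((X u)^(l+1))' = (l+1) X^l u^l (cosh - 1)`
    have hderiv := coeff_derivative ((X * u) ^ (l + 1)) (2 * n + l)
    rw [Derivation.leibniz_pow, add_tsub_cancel_right, derivative_X_mul_sinhc_sub_one,
      map_nsmul, smul_eq_mul, nsmul_eq_mul, mul_pow, mul_assoc, coeff_X_pow_mul',
      if_pos (by omega), Nat.add_sub_cancel, coeff_two_mul_mul_of_rescale_neg_one_eq heven,
      mul_pow, coeff_X_pow_mul', if_pos (by omega), show 2 * n + l + 1 - (l + 1) = 2 * n by omega]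
      at hderiv
    have hsum : ∑ p ∈ antidiagonal n, coeff (2 * p.1) (u ^ l) * coeff (2 * p.2) (cosh - 1) =
        l ! * (∑ i ∈ range n, a i l * (2 * n + l).choose (2 * n - 2 * i)) / (2 * n + l)! := by
      rw [Nat.sum_antidiagonal_eq_sum_range_succ_mk, sum_range_succ, mul_sum, sum_div,
        Nat.sub_self, coeff_two_mul_cosh_sub_one, if_pos rfl, mul_zero, add_zero]
      refine sum_congr rfl fun i hi => ?_
      have hin := mem_range.mp hi
      dsimp only
      rw [ih, coeff_two_mul_cosh_sub_one, if_neg (by omega), cast_choose_two_mul_sub hin.le]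
      field_simp
    rw [hsum] at hderiv
    rw [a_succ_eq_sum_range, show 2 * n + (l + 1) = 2 * n + l + 1 by omega,
      factorial_succ (2 * n + l), factorial_succ l]
    have hf : ((2 * n + l)! : ℚ) ≠ 0 := by positivity
    push_cast at hderiv ⊢
    field_simp at hderiv ⊢
    linear_combination -hderiv

lemma coeff_two_mul_logOf_sinhc (n : ℕ) :
    coeff (2 * n) (logOf sinhc) =
      ∑ l ∈ Icc 1 n, (-1) ^ (l + 1) / l * (l ! * a n l / (2 * n + l)!) := by
  rw [coeff_logOf constantCoeff_sinhc fun l hl => by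
    rw [coeff_two_mul_sinhc_sub_one_pow, a_eq_zero hl, mul_zero, zero_div]]
  simp only [Algebra.algebraMap_self_apply, coeff_two_mul_sinhc_sub_one_pow]

lemma two_mul_coeff_logOf_sinhc {n : ℕ} (hn : n ≠ 0) :
    2 * n * coeff (2 * n) (logOf sinhc) = 2 ^ (2 * n) * bernoulli (2 * n) / (2 * n)! := by
  have h := congrArg (coeff (2 * n)) X_mul_derivative_logOf_sinhc
  obtain ⟨m, hm⟩ : ∃ m, 2 * n = m + 1 := ⟨2 * n - 1, by omega⟩
  rw [map_add, map_sub, coeff_rescale, coeff_one, coeff_X, if_neg (by omega), if_neg (by omega),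
    bernoulliPowerSeries, coeff_mk, Algebra.algebraMap_self_apply, hm, coeff_succ_X_mul,
    coeff_derivative] at h
  have hcast : (2 * n : ℚ) = m + 1 := by exact_mod_cast hm
  rw [hm]
  linear_combination h + coeff (m + 1) (logOf sinhc) * hcast

end PowerSeries

/-- For every integer `n ≥ 1`,
`B_{2n}/(2n) = ((2n)!/(6^n·2^{2n})) · ∑_{l=1}^{n} (−1)^{l+1} · P(n+1−l, n)`. -/
theorem bernoulli_div_eq_P_sum (n : ℕ) (hn : 1 ≤ n) :
    bernoulli (2 * n) / (2 * n) =
      ((Nat.factorial (2 * n) : ℚ) / (6 ^ n * 2 ^ (2 * n))) *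
        ∑ l ∈ Finset.Icc 1 n, (-1 : ℚ) ^ (l + 1) * P (n + 1 - l) n := by
  have hsum : ∑ l ∈ Icc 1 n, (-1 : ℚ) ^ (l + 1) * P (n + 1 - l) n =
      6 ^ n * coeff (2 * n) (logOf sinhc) := by
    rw [coeff_two_mul_logOf_sinhc, mul_sum]
    refine sum_congr rfl fun l hl => ?_
    rw [P_eq hl]
    ring
  have hB := two_mul_coeff_logOf_sinhc (n := n) (by omega)
  have hf : ((2 * n)! : ℚ) ≠ 0 := by positivity
  rw [eq_div_iff hf] at hB
  rw [hsum]
  field_simp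
  linear_combination -hB
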